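/- arXiv:1205.6367 — 3 statements merged into one kernel-verified Lean document; each statement's English description precedes it below -/
import Mathlib

section
/- (Property (2.12): Krylov characterization of the PLS basis.) Assume K is injective, and that K(b), K²(b), …, K^p(b) are linearly independent. Suppose ψ_1, …, ψ_{p−1} ∈ H satisfy span{ψ_1, …, ψ_{p−1}} = span{K(b), …, K^{p−1}(b)}. Then there exists ψ_p ∈ span{K(b), …, K^p(b)} with ⟨ψ_j, K ψ_p⟩ = 0 for j = 1, …, p−1 and ⟨ψ_p, K ψ_p⟩ = 1, this ψ_p is unique up to a sign change, and span{ψ_1, …, ψ_{p−1}, ψ_p} = span{K(b), …, K^p(b)}. -/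
/-!
Because `K` is positive and injective, `(u, v) ↦ ⟪u, K v⟫` is an inner product on `H`: it is a
semi-inner product, and Cauchy–Schwarz for it gives `‖K x‖⁴ ≤ ⟪x, K x⟫ ⟪K x, K² x⟫`,
so `⟪x, K x⟫ = 0` forces `K x = 0`, hence `x = 0`. For this inner product `W = span {ψ j}` has
codimension one in the Krylov space `V = span {K b, …, K^p b}`, so the orthogonal complement of
`W` inside `V` is a line. Its two unit vectors are the admissible `ψp`, and `W` together with
that line spans `V`.
-/

open scoped RealInnerProductSpace

open Module Submodule Set Function

section NormedSpace

variable {F : Type*} [NormedAddCommGroup F] [NormedSpace ℝ F]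

theorem eq_or_eq_neg_of_mem_span_singleton_of_norm_eq_one {v q : F} (hv : ‖v‖ = 1)
    (hq : q ∈ ℝ ∙ v) (hq1 : ‖q‖ = 1) : q = v ∨ q = -v := by
  obtain ⟨c, rfl⟩ := mem_span_singleton.1 hq
  rw [norm_smul, hv, mul_one, Real.norm_eq_abs, abs_eq zero_le_one] at hq1
  rcases hq1 with rfl | rfl
  · exact .inl (one_smul ℝ v)
  · exact .inr (neg_one_smul ℝ v)

theorem Submodule.exists_norm_eq_one_span_singleton_eq_of_finrank_eq_one {U : Submodule ℝ F}
    (hU : finrank ℝ U = 1) : ∃ v, ‖v‖ = 1 ∧ ℝ ∙ v = U := by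
  have : FiniteDimensional ℝ U := finite_of_finrank_eq_succ hU
  obtain ⟨u, hu⟩ := finrank_pos_iff_exists_ne_zero.1 (hU ▸ Nat.one_pos)
  have hu' : (u : F) ≠ 0 := by simpa using hu
  refine ⟨‖(u : F)‖⁻¹ • (u : F), norm_smul_inv_norm hu', eq_of_le_of_finrank_eq ?_ ?_⟩
  · exact (span_singleton_le_iff_mem _ _).2 (U.smul_mem _ u.2)
  · rw [finrank_span_singleton (smul_ne_zero (inv_ne_zero (norm_ne_zero_iff.2 hu')) hu'), hU]

end NormedSpace

theorem Submodule.mem_orthogonal_span_range_iff {𝕜 E ι : Type*} [RCLike 𝕜]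
    [NormedAddCommGroup E] [InnerProductSpace 𝕜 E] {ψ : ι → E} {x : E} :
    x ∈ (span 𝕜 (range ψ))ᗮ ↔ ∀ i, inner 𝕜 (ψ i) x = 0 := by
  rw [← span_singleton_le_iff_mem, ← isOrtho_iff_le, isOrtho_comm, isOrtho_span]
  simp

theorem Submodule.exists_gramSchmidt_step {E : Type*} [NormedAddCommGroup E]
    [InnerProductSpace ℝ E] {W V : Submodule ℝ E} [FiniteDimensional ℝ V] (hWV : W ≤ V)
    (hdim : finrank ℝ W + 1 = finrank ℝ V) :
    ∃ v ∈ Wᗮ ⊓ V, ‖v‖ = 1 ∧ W ⊔ ℝ ∙ v = V ∧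
      ∀ q ∈ Wᗮ ⊓ V, ‖q‖ = 1 → q = v ∨ q = -v := by
  have : FiniteDimensional ℝ W := finiteDimensional_of_le hWV
  obtain ⟨v, hv1, hline⟩ := exists_norm_eq_one_span_singleton_eq_of_finrank_eq_one
    (finrank_add_inf_finrank_orthogonal' hWV hdim)
  refine ⟨v, hline ▸ mem_span_singleton_self v, hv1, ?_, fun q hq hq1 =>
    eq_or_eq_neg_of_mem_span_singleton_of_norm_eq_one hv1 (hline ▸ hq) hq1⟩
  rw [hline]
  exact sup_orthogonal_inf_of_hasOrthogonalProjection hWV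

theorem LinearIndependent.finrank_span_range_castSucc_add_one {R M : Type*} [DivisionRing R]
    [AddCommGroup M] [Module R M] {m : ℕ} {f : Fin (m + 1) → M} (hf : LinearIndependent R f) :
    finrank R (span R (range fun j : Fin m => f j.castSucc)) + 1 =
      finrank R (span R (range f)) := by
  rw [finrank_span_eq_card hf, finrank_span_eq_card (b := fun j : Fin m => f j.castSucc)
    (hf.comp _ (Fin.castSucc_injective m))]
  simp

section

variable {H : Type*} [NormedAddCommGroup H] [InnerProductSpace ℝ H]

/-- `H` equipped with the form `(u, v) ↦ ⟪u, K v⟫`, an inner product when `K` is positive and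
injective. -/
def WithOpInner (_K : H →L[ℝ] H) : Type _ := H

namespace WithOpInner

variable (K : H →L[ℝ] H)

instance : AddCommGroup (WithOpInner K) := inferInstanceAs (AddCommGroup H)

instance : Module ℝ (WithOpInner K) := inferInstanceAs (Module ℝ H)

def equiv : H ≃ₗ[ℝ] WithOpInner K := LinearEquiv.refl ℝ H

variable {K}

@[reducible] def preCore (hK : K.IsPositive) : PreInnerProductSpace.Core ℝ (WithOpInner K) where
  inner u v := ⟪(equiv K).symm u, K ((equiv K).symm v)⟫
  conj_inner_symm u v := by simp [← hK.inner_left_eq_inner_right, real_inner_comm]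
  re_inner_nonneg u := hK.inner_nonneg_right _
  add_left u v w := by simp [inner_add_left]
  smul_left u v r := by simp [inner_smul_left]

theorem _root_.ContinuousLinearMap.IsPositive.apply_eq_zero_of_inner_apply_self_eq_zero
    (hK : K.IsPositive) {x : H} (hx : ⟪x, K x⟫ = 0) : K x = 0 := by
  let := preCore hK
  have hCS :=
    InnerProductSpace.Core.inner_mul_inner_self_le (𝕜 := ℝ) (equiv K x) (equiv K (K x))
  change ‖⟪x, K (K x)⟫‖ * ‖⟪K x, K x⟫‖ ≤ ⟪x, K x⟫ * ⟪K x, K (K x)⟫ at hCS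
  rw [hx, zero_mul, ← hK.inner_left_eq_inner_right, ← sq, sq_nonpos_iff, norm_eq_zero] at hCS
  exact inner_self_eq_zero.1 hCS

@[reducible] def core (hK : K.IsPositive) (hinj : Injective K) :
    InnerProductSpace.Core ℝ (WithOpInner K) :=
  { preCore hK with
    definite u hu := (equiv K).symm.injective <| hinj <| by
      rw [map_zero, map_zero]
      exact hK.apply_eq_zero_of_inner_apply_self_eq_zero hu }

end WithOpInner

open WithOpInner

theorem ContinuousLinearMap.IsPositive.exists_gramSchmidt_step {K : H →L[ℝ] H}
    (hK : K.IsPositive) (hinj : Injective K) {W V : Submodule ℝ H} [FiniteDimensional ℝ V]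
    (hWV : W ≤ V) (hdim : finrank ℝ W + 1 = finrank ℝ V) :
    ∃ v ∈ V, K v ∈ Wᗮ ∧ ⟪v, K v⟫ = 1 ∧ W ⊔ ℝ ∙ v = V ∧
      ∀ q ∈ V, K q ∈ Wᗮ → ⟪q, K q⟫ = 1 → q = v ∨ q = -v := by
  let : NormedAddCommGroup (WithOpInner K) := (core hK hinj).toNormedAddCommGroup
  let : InnerProductSpace ℝ (WithOpInner K) := .ofCore _
  let e := equiv K
  have mem_orthogonal_map (q : H) :
      e q ∈ (W.map (e : H →ₗ[ℝ] WithOpInner K))ᗮ ↔ K q ∈ Wᗮ := by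
    simp only [mem_orthogonal, mem_map, forall_exists_index, and_imp, forall_apply_eq_imp_iff₂]
    rfl
  have norm_eq_one (q : H) : ‖e q‖ = 1 ↔ ⟪q, K q⟫ = 1 := by
    rw [← pow_eq_one_iff_of_nonneg (norm_nonneg _) two_ne_zero, ← real_inner_self_eq_norm_sq]
    rfl
  obtain ⟨v, ⟨hvW, hvV⟩, hv1, hsup, huniq⟩ := Submodule.exists_gramSchmidt_step
    (map_mono (f := (e : H →ₗ[ℝ] WithOpInner K)) hWV) (by simpa only [LinearEquiv.finrank_map_eq])
  obtain ⟨v, rfl⟩ := e.surjective v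
  refine ⟨v, by simpa using (mem_map_equiv V).1 hvV, (mem_orthogonal_map v).1 hvW,
    (norm_eq_one v).1 hv1, ?_, fun q hqV hqW hq1 => ?_⟩
  · apply map_injective_of_injective e.injective
    rwa [Submodule.map_sup, map_span, image_singleton]
  · have := huniq (e q) ⟨(mem_orthogonal_map q).2 hqW, mem_map_of_mem hqV⟩
      ((norm_eq_one q).2 hq1)
    simpa only [← map_neg, e.injective.eq_iff] using this

end

/-- (Property (2.12): Krylov characterization of the PLS basis.)
`K` is a positive semidefinite, self-adjoint, injective (compact/trace-class) operator on
a real Hilbert space `H` and `b ∈ H`.  Writing `p = m + 1`, assume `K b, …, K^p b` are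
linearly independent and that `ψ 0, …, ψ (m-1)` span the same subspace as
`K b, …, K^{p-1} b`.  Then there exists `ψp` in the span of `K b, …, K^p b` with
`⟪ψ j, K ψp⟫ = 0` for all `j` and `⟪ψp, K ψp⟫ = 1`; it is unique up to sign, and
adjoining it yields the span of `K b, …, K^p b`. -/
theorem stmt_2
    {H : Type*} [NormedAddCommGroup H] [InnerProductSpace ℝ H] [CompleteSpace H]
    (K : H →L[ℝ] H) (hK_sa : IsSelfAdjoint K) (hK_pos : ∀ x : H, 0 ≤ ⟪K x, x⟫)
    (hK_inj : Function.Injective K)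
    (b : H) (m : ℕ) (ψ : Fin m → H)
    (hLI : LinearIndependent ℝ fun j : Fin (m + 1) => (K ^ ((j : ℕ) + 1)) b)
    (hspan : Submodule.span ℝ (Set.range ψ) =
      Submodule.span ℝ (Set.range fun j : Fin m => (K ^ ((j : ℕ) + 1)) b)) :
    ∃ ψp ∈ Submodule.span ℝ (Set.range fun j : Fin (m + 1) => (K ^ ((j : ℕ) + 1)) b),
      (∀ j : Fin m, ⟪ψ j, K ψp⟫ = 0) ∧
      ⟪ψp, K ψp⟫ = 1 ∧
      Submodule.span ℝ (insert ψp (Set.range ψ)) =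
        Submodule.span ℝ (Set.range fun j : Fin (m + 1) => (K ^ ((j : ℕ) + 1)) b) ∧
      ∀ ψp' ∈ Submodule.span ℝ (Set.range fun j : Fin (m + 1) => (K ^ ((j : ℕ) + 1)) b),
        (∀ j : Fin m, ⟪ψ j, K ψp'⟫ = 0) → ⟪ψp', K ψp'⟫ = 1 →
          ψp' = ψp ∨ ψp' = -ψp := by
  set f : Fin (m + 1) → H := fun j => (K ^ ((j : ℕ) + 1)) b
  have hK : K.IsPositive := (K.isPositive_iff').2 ⟨hK_sa, hK_pos⟩
  have hWV : span ℝ (range ψ) ≤ span ℝ (range f) :=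
    hspan ▸ span_mono (range_comp_subset_range Fin.castSucc f)
  have hdim : finrank ℝ (span ℝ (range ψ)) + 1 = finrank ℝ (span ℝ (range f)) :=
    hspan ▸ hLI.finrank_span_range_castSucc_add_one
  have : FiniteDimensional ℝ (span ℝ (range f)) := .span_of_finite ℝ (finite_range f)
  obtain ⟨v, hvV, hvW, hv1, hsup, huniq⟩ := hK.exists_gramSchmidt_step hK_inj hWV hdim
  refine ⟨v, hvV, mem_orthogonal_span_range_iff.1 hvW, hv1, by rw [span_insert, sup_comm, hsup],
    fun q hqV hqW hq1 => huniq q hqV (mem_orthogonal_span_range_iff.2 hqW) hq1⟩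
end

section
/- (Theorem 2.) Assume all eigenvalues of K are strictly positive (equivalently, K is injective). Then every b ∈ H lies in the closed linear span of {K^j(b) : j ≥ 1}; that is, b can be approximated in the norm of H arbitrarily well by finite linear combinations Σ_{j=1}^m w_j K^j(b) with real coefficients w_j. -/
open scoped RealInnerProductSpace

/-!
Let `M` be the closed span of `K b, K² b, …`. It is `K`-invariant, so by self-adjointness so is
`Mᗮ`. Writing `b = u + v` with `u ∈ M`, `v ∈ Mᗮ`, the vector `K v = K b - K u` lies in
`M ∩ Mᗮ = 0`, and `K` is injective because its range contains the dense span of the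
eigenvectors. Hence `v = 0` and `b ∈ M`.
-/

theorem LinearMap.span_range_le_range_of_apply_eq_smul {𝕜 M ι : Type*} [Field 𝕜]
    [AddCommGroup M] [Module 𝕜 M] {T : M →ₗ[𝕜] M} {θ : ι → 𝕜} {φ : ι → M}
    (h_eig : ∀ k, T (φ k) = θ k • φ k) (hθ : ∀ k, θ k ≠ 0) :
    Submodule.span 𝕜 (Set.range φ) ≤ LinearMap.range T := by
  rw [Submodule.span_le]
  rintro _ ⟨k, rfl⟩
  exact ⟨(θ k)⁻¹ • φ k, by rw [map_smul, h_eig, smul_smul, inv_mul_cancel₀ (hθ k), one_smul]⟩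

theorem Submodule.exists_norm_sub_sum_lt_of_mem_topologicalClosure_span {𝕜 E : Type*}
    [NormedField 𝕜] [SeminormedAddCommGroup E] [NormedSpace 𝕜 E] {f : ℕ → E} {b : E}
    (hb : b ∈ (Submodule.span 𝕜 (Set.range f)).topologicalClosure) {ε : ℝ} (hε : 0 < ε) :
    ∃ (m : ℕ) (w : Fin m → 𝕜), ‖b - ∑ j : Fin m, w j • f j‖ < ε := by
  obtain ⟨y, hy, hby⟩ := Metric.mem_closure_iff.mp hb ε hε
  obtain ⟨c, rfl⟩ := Finsupp.mem_span_range_iff_exists_finsupp.mp hy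
  obtain ⟨m, hm⟩ : ∃ m, c.support ⊆ Finset.range m := ⟨_, c.support.subset_range_sup_succ⟩
  refine ⟨m, fun j => c j, ?_⟩
  rwa [Fin.sum_univ_eq_sum_range (fun j => c j • f j),
    ← Finsupp.sum_of_support_subset c hm (fun i a => a • f i) fun _ _ => zero_smul 𝕜 _,
    ← dist_eq_norm]

namespace LinearMap.IsSymmetric

variable {𝕜 E : Type*} [RCLike 𝕜] [NormedAddCommGroup E] [InnerProductSpace 𝕜 E]
  {T : E →ₗ[𝕜] E}

theorem ker_eq_bot_of_denseRange (hT : T.IsSymmetric)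
    (h : (LinearMap.range T).topologicalClosure = ⊤) : LinearMap.ker T = ⊥ := by
  rw [← hT.orthogonal_range, ← Submodule.orthogonal_closure, h, Submodule.top_orthogonal_eq_bot]

theorem mapsTo_orthogonal (hT : T.IsSymmetric) {M : Submodule 𝕜 E} (hM : Set.MapsTo T M M) :
    Set.MapsTo T Mᗮ Mᗮ := fun v hv w hw => by
  rw [← hT]
  exact hv (T w) (hM hw)

theorem mem_of_apply_mem (hT : T.IsSymmetric) (hinj : Function.Injective T)
    {M : Submodule 𝕜 E} [M.HasOrthogonalProjection] (hM : Set.MapsTo T M M) {b : E}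
    (hb : T b ∈ M) : b ∈ M := by
  set u := M.starProjection b
  have hu : u ∈ M := M.starProjection_apply_mem b
  have hv : b - u ∈ Mᗮ := M.sub_starProjection_mem_orthogonal b
  have hTv : T (b - u) ∈ M ⊓ Mᗮ :=
    ⟨by rw [map_sub]; exact M.sub_mem hb (hM hu), hT.mapsTo_orthogonal hM hv⟩
  rw [Submodule.inf_orthogonal_eq_bot, Submodule.mem_bot, ← map_zero T] at hTv
  rwa [sub_eq_zero.mp (hinj hTv)]

end LinearMap.IsSymmetric

theorem ContinuousLinearMap.mapsTo_topologicalClosure_span_range_pow_apply {R M : Type*}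
    [Semiring R] [AddCommMonoid M] [Module R M] [TopologicalSpace M] [ContinuousAdd M]
    [ContinuousConstSMul R M] (T : M →L[R] M) (b : M) :
    Set.MapsTo T (Submodule.span R (Set.range fun j : ℕ => (T ^ (j + 1)) b)).topologicalClosure
      (Submodule.span R (Set.range fun j : ℕ => (T ^ (j + 1)) b)).topologicalClosure := by
  have h : (Submodule.span R (Set.range fun j : ℕ => (T ^ (j + 1)) b)).map (T : M →ₗ[R] M) ≤
      Submodule.span R (Set.range fun j : ℕ => (T ^ (j + 1)) b) := by
    rw [Submodule.map_span, Submodule.span_le]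
    rintro _ ⟨_, ⟨j, rfl⟩, rfl⟩
    exact Submodule.subset_span ⟨j + 1, by dsimp only; rw [pow_succ' T (j + 1)]; rfl⟩
  exact Set.MapsTo.closure (fun x hx => h ⟨x, hx, rfl⟩) T.continuous

theorem stmt_3_general
    {H : Type*} [NormedAddCommGroup H] [InnerProductSpace ℝ H] [CompleteSpace H]
    (K : H →L[ℝ] H) (hK_sa : IsSelfAdjoint K)
    (θ : ℕ → ℝ) (φ : ℕ → H)
    (hφ_complete : (Submodule.span ℝ (Set.range φ)).topologicalClosure = ⊤)
    (h_eig : ∀ k, K (φ k) = θ k • φ k)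
    (hθ_pos : ∀ k, 0 < θ k)
    (b : H) :
    b ∈ (Submodule.span ℝ (Set.range fun j : ℕ => (K ^ (j + 1)) b)).topologicalClosure ∧
      ∀ ε > (0 : ℝ), ∃ (m : ℕ) (w : Fin m → ℝ),
        ‖b - ∑ j : Fin m, w j • (K ^ ((j : ℕ) + 1)) b‖ < ε := by
  have hK : (K : H →ₗ[ℝ] H).IsSymmetric := hK_sa.isSymmetric
  have hK_inj : Function.Injective K := by
    rw [← ContinuousLinearMap.coe_coe, ← LinearMap.ker_eq_bot]
    refine hK.ker_eq_bot_of_denseRange <|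
      eq_top_mono (Submodule.topologicalClosure_mono ?_) hφ_complete
    exact LinearMap.span_range_le_range_of_apply_eq_smul h_eig fun k => (hθ_pos k).ne'
  set M := (Submodule.span ℝ (Set.range fun j : ℕ => (K ^ (j + 1)) b)).topologicalClosure
  have hKb : K b ∈ M := Submodule.le_topologicalClosure _ (Submodule.subset_span ⟨0, by simp⟩)
  have : CompleteSpace M := (Submodule.isClosed_topologicalClosure _).completeSpace_coe
  have hb : b ∈ M :=
    hK.mem_of_apply_mem hK_inj (K.mapsTo_topologicalClosure_span_range_pow_apply b) hKb
  exact ⟨hb, fun _ hε => Submodule.exists_norm_sub_sum_lt_of_mem_topologicalClosure_span hb hε⟩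

/-- (Theorem 2.) `K` is a positive semidefinite, self-adjoint, trace-class operator on a
separable real Hilbert space `H`, with eigenvalues `θ 0 ≥ θ 1 ≥ … ≥ 0` and corresponding
complete orthonormal system of eigenvectors `φ`.  If all eigenvalues of `K` are strictly
positive (equivalently, `K` is injective), then every `b ∈ H` lies in the closed linear
span of `{K^j(b) : j ≥ 1}`; that is, `b` can be approximated in norm arbitrarily well by
finite linear combinations `∑_{j=1}^m w_j K^j(b)`. -/
theorem stmt_3
    {H : Type*} [NormedAddCommGroup H] [InnerProductSpace ℝ H] [CompleteSpace H]
    [TopologicalSpace.SeparableSpace H]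
    (K : H →L[ℝ] H) (hK_sa : IsSelfAdjoint K) (hK_pos : ∀ x : H, 0 ≤ ⟪K x, x⟫)
    (θ : ℕ → ℝ) (φ : ℕ → H)
    (hφ : Orthonormal ℝ φ)
    (hφ_complete : (Submodule.span ℝ (Set.range φ)).topologicalClosure = ⊤)
    (hθ_anti : Antitone θ)
    (hθ_summable : Summable θ)
    (h_eig : ∀ k, K (φ k) = θ k • φ k)
    (hθ_pos : ∀ k, 0 < θ k)
    (b : H) :
    b ∈ (Submodule.span ℝ (Set.range fun j : ℕ => (K ^ (j + 1)) b)).topologicalClosure ∧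
      ∀ ε > (0 : ℝ), ∃ (m : ℕ) (w : Fin m → ℝ),
        ‖b - ∑ j : Fin m, w j • (K ^ ((j : ℕ) + 1)) b‖ < ε :=
  stmt_3_general K hK_sa θ φ hφ_complete h_eig hθ_pos b
end

section
/- (Theorem 3, deterministic core: expansion (5.10)–(5.12) of the iterated estimators.) Let n ≥ 1, let ξ, η be self-adjoint Hilbert–Schmidt operators on H, let ξ₀, η₀ ∈ H, and set K̂ = K + n^{-1/2} ξ + n^{-1} η (an operator on H), ĝ₁ = K(b) + n^{-1/2} ξ₀ + n^{-1} η₀, and ĝ_{j+1} = K̂(ĝ_j) for j ≥ 1. Define ζ_j = ξ(K^j(b)), ξ_j = K^{j−1}(ξ₀) + Σ_{k=0}^{j−2} K^k(ζ_{j−k−1}), and η_j := n(ĝ_j − K^j(b)) − n^{1/2} ξ_j. Then for every j ≥ 1, ĝ_j = K^j(b) + n^{-1/2} ξ_j + n^{-1} η_j and ‖η_j‖ ≤ R₁^{j−1} ‖η₀‖ + R₂ Σ_{k=1}^{j−1} R₁^{j−k−1} (‖K^k(b)‖ + ⫼K^{k−1}⫼ ‖ξ₀‖) + R₂ ⫼ξ⫼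 Σ_{k=1}^{j−1} R₁^{j−k−1} Σ_{ℓ=0}^{k−2} ⫼K^ℓ⫼ ‖K^{k−ℓ−1}(b)‖, where R₁ = ⫼K⫼ + n^{-1/2} ⫼ξ⫼ + n^{-1} ⫼η⫼ and R₂ = ⫼ξ⫼ + ⫼η⫼. -/
/-!
Substituting `ĝ_j = K^j b + n^{-1/2} ξ_j + n^{-1} η_j` into `ĝ_{j+1} = K̂ ĝ_j` and using
`ξ_{j+1} = K ξ_j + ξ (K^j b)`, the first-order terms cancel and
`η_{j+1} = K̂ η_j + ξ ξ_j + n^{-1/2} η ξ_j + η (K^j b)`.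
As the operator norm is dominated by the Hilbert–Schmidt norm, this gives
`‖η_{j+1}‖ ≤ R₁ ‖η_j‖ + R₂ (‖K^j b‖ + ‖ξ_j‖)`; bounding `‖ξ_j‖` termwise from its defining sum
and unrolling this linear recursive inequality (discrete Grönwall) yields the estimate.
-/

open scoped RealInnerProductSpace

open Finset

section HilbertSchmidt

variable {H F : Type*} [NormedAddCommGroup H] [InnerProductSpace ℝ H]
  [NormedAddCommGroup F] [NormedSpace ℝ F] {ι : Type*}

noncomputable def hsNorm (e : HilbertBasis ι ℝ H) (T : H →L[ℝ] F) : ℝ :=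
  √(∑' i, ‖T (e i)‖ ^ 2)

-- The identity is not Hilbert–Schmidt in infinite dimension, hence the convention `⫼T⁰⫼ = 1`.
noncomputable def hsNormPow (e : HilbertBasis ι ℝ H) (T : H →L[ℝ] H) (m : ℕ) : ℝ :=
  if m = 0 then 1 else hsNorm e (T ^ m)

variable {e : HilbertBasis ι ℝ H}

theorem hsNorm_nonneg (T : H →L[ℝ] F) : 0 ≤ hsNorm e T := Real.sqrt_nonneg _

theorem norm_apply_le_hsNorm {T : H →L[ℝ] F} (hT : Summable fun i => ‖T (e i)‖ ^ 2) (x : H) :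
    ‖T x‖ ≤ hsNorm e T * ‖x‖ := by
  have hx : HasSum (fun i => ‖e.repr x i‖ ^ 2) (‖x‖ ^ 2) := by
    simpa [LinearIsometryEquiv.norm_map] using lp.hasSum_norm (p := 2) (by norm_num) (e.repr x)
  have hTx : HasSum (fun i => e.repr x i • T (e i)) (T x) := by
    simpa using (e.hasSum_repr x).mapL T
  obtain ⟨hsum, hle⟩ := Real.summable_and_inner_le_Lp_mul_Lq_tsum_of_nonneg
    Real.HolderConjugate.two_two (fun i => norm_nonneg (e.repr x i))
    (fun i => norm_nonneg (T (e i))) (by simpa [Real.rpow_two] using hx.summable)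
    (by simpa [Real.rpow_two] using hT)
  calc ‖T x‖ ≤ ∑' i, ‖e.repr x i‖ * ‖T (e i)‖ := by
        simpa [hTx.tsum_eq, norm_smul] using
          norm_tsum_le_tsum_norm (f := fun i => e.repr x i • T (e i))
            (by simpa [norm_smul] using hsum)
    _ ≤ _ := hle
    _ = hsNorm e T * ‖x‖ := by
        simp only [Real.rpow_two, hx.tsum_eq, ← Real.sqrt_eq_rpow, hsNorm]
        rw [Real.sqrt_sq (norm_nonneg x), mul_comm]

theorem opNorm_le_hsNorm {T : H →L[ℝ] F} (hT : Summable fun i => ‖T (e i)‖ ^ 2) :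
    ‖T‖ ≤ hsNorm e T :=
  T.opNorm_le_bound (hsNorm_nonneg T) (norm_apply_le_hsNorm hT)

theorem summable_norm_comp_apply_sq {G : Type*} [NormedAddCommGroup G] [NormedSpace ℝ G]
    (S : F →L[ℝ] G) {T : H →L[ℝ] F} (hT : Summable fun i => ‖T (e i)‖ ^ 2) :
    Summable fun i => ‖(S.comp T) (e i)‖ ^ 2 :=
  (hT.mul_left (‖S‖ ^ 2)).of_nonneg_of_le (fun i => by positivity) fun i => by
    rw [← mul_pow]
    exact pow_le_pow_left₀ (norm_nonneg _) (S.le_opNorm _) 2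

theorem hsNormPow_nonneg (T : H →L[ℝ] H) (m : ℕ) : 0 ≤ hsNormPow e T m := by
  unfold hsNormPow
  split_ifs
  exacts [zero_le_one, hsNorm_nonneg _]

theorem norm_pow_apply_le_hsNormPow {T : H →L[ℝ] H} (hT : Summable fun i => ‖T (e i)‖ ^ 2)
    (m : ℕ) (x : H) : ‖(T ^ m) x‖ ≤ hsNormPow e T m * ‖x‖ := by
  unfold hsNormPow
  split_ifs with hm
  · simp [hm]
  · obtain ⟨k, rfl⟩ := Nat.exists_eq_succ_of_ne_zero hm
    refine norm_apply_le_hsNorm ?_ x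
    rw [pow_succ]
    exact summable_norm_comp_apply_sq _ hT

end HilbertSchmidt

theorem le_pow_mul_add_sum_of_le_mul_add {u b : ℕ → ℝ} {c : ℝ} (hc : 0 ≤ c)
    (hu : ∀ j ≥ 1, u (j + 1) ≤ c * u j + b j) {j : ℕ} (hj : 1 ≤ j) :
    u j ≤ c ^ (j - 1) * u 1 + ∑ k ∈ Icc 1 (j - 1), c ^ (j - k - 1) * b k := by
  have := discrete_gronwall_prod_general (c := fun _ => c) hu (fun _ _ => hc) hj
  obtain ⟨m, rfl⟩ := Nat.exists_eq_add_of_le' hj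
  simp only [prod_const, Ico_add_one_right_eq_Icc, Nat.card_Icc, Nat.add_sub_cancel,
    Nat.sub_sub, Nat.add_sub_add_right] at this ⊢
  simpa only [mul_comm] using this

section Expansion

variable {E : Type*}

noncomputable def expansionRemainder [AddCommGroup E] [Module ℝ E] (n : ℝ) (g a x : E) : E :=
  n • (g - a) - √n • x

theorem expansionRemainder_eq_iff [AddCommGroup E] [Module ℝ E] {n : ℝ} (hn : 0 < n)
    {g a x y : E} : expansionRemainder n g a x = y ↔ g = a + (√n)⁻¹ • x + n⁻¹ • y := by
  have hr : √n ≠ 0 := (Real.sqrt_pos.2 hn).ne'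
  have hsq : √n * √n = n := Real.mul_self_sqrt hn.le
  unfold expansionRemainder
  -- With `n = r * r`, `field_simp` no longer has to see through the square root.
  generalize √n = r at hr hsq
  subst hsq
  constructor <;> rintro rfl <;> match_scalars <;> field_simp <;> ring

variable [NormedAddCommGroup E] [NormedSpace ℝ E] (K ξ : E →L[ℝ] E) (b ξ₀ : E)

def firstOrderTerm (j : ℕ) : E :=
  (K ^ (j - 1)) ξ₀ + ∑ k ∈ range (j - 1), (K ^ k) (ξ ((K ^ (j - k - 1)) b))

theorem firstOrderTerm_succ {j : ℕ} (hj : 1 ≤ j) :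
    firstOrderTerm K ξ b ξ₀ (j + 1) = K (firstOrderTerm K ξ b ξ₀ j) + ξ ((K ^ j) b) := by
  obtain ⟨m, rfl⟩ := Nat.exists_eq_add_of_le' hj
  simp only [firstOrderTerm, Nat.add_sub_cancel, map_add, map_sum, sum_range_succ', pow_zero,
    one_apply_eq_self, Nat.sub_zero, pow_succ', mul_apply_eq_comp, Nat.add_sub_add_right]
  abel

theorem norm_firstOrderTerm_le {c : ℕ → ℝ} (hc : ∀ m, 0 ≤ c m)
    (hK : ∀ m x, ‖(K ^ m) x‖ ≤ c m * ‖x‖) {cξ : ℝ} (hξ : ‖ξ‖ ≤ cξ) (j : ℕ) :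
    ‖firstOrderTerm K ξ b ξ₀ j‖ ≤
      c (j - 1) * ‖ξ₀‖ + cξ * ∑ l ∈ range (j - 1), c l * ‖(K ^ (j - l - 1)) b‖ := by
  refine (norm_add_le _ _).trans (add_le_add (hK _ _) ((norm_sum_le _ _).trans ?_))
  rw [mul_sum]
  refine sum_le_sum fun l _ => (hK _ _).trans ?_
  calc c l * ‖ξ ((K ^ (j - l - 1)) b)‖ ≤ c l * (cξ * ‖(K ^ (j - l - 1)) b‖) := by
        gcongr; exacts [hc l, ξ.le_of_opNorm_le hξ _]
    _ = _ := by ring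

variable {K ξ} (η : E →L[ℝ] E) {n : ℝ}

theorem expansionRemainder_map (hn : 0 < n) (g a x : E) :
    expansionRemainder n ((K + (√n)⁻¹ • ξ + n⁻¹ • η) g) (K a) (K x + ξ a) =
      (K + (√n)⁻¹ • ξ + n⁻¹ • η) (expansionRemainder n g a x) + ξ x + (√n)⁻¹ • η x + η a := by
  have hr : √n ≠ 0 := (Real.sqrt_pos.2 hn).ne'
  have hsq : √n * √n = n := Real.mul_self_sqrt hn.le
  obtain ⟨y, hy⟩ : ∃ y, expansionRemainder n g a x = y := ⟨_, rfl⟩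
  rw [hy, (expansionRemainder_eq_iff hn).1 hy]
  simp only [expansionRemainder, add_apply, smul_apply, map_add, map_smul]
  generalize √n = r at hr hsq
  subst hsq
  match_scalars <;> field_simp <;> ring

theorem norm_expansionRemainder_map_le (hn : 1 ≤ n) {cK cξ cη : ℝ} (hK : ‖K‖ ≤ cK)
    (hξ : ‖ξ‖ ≤ cξ) (hη : ‖η‖ ≤ cη) (g a x : E) :
    ‖expansionRemainder n ((K + (√n)⁻¹ • ξ + n⁻¹ • η) g) (K a) (K x + ξ a)‖ ≤
      (cK + (√n)⁻¹ * cξ + n⁻¹ * cη) * ‖expansionRemainder n g a x‖ +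
        (cξ + cη) * (‖a‖ + ‖x‖) := by
  rw [expansionRemainder_map η (by linarith), add_assoc _ (ξ x)]
  set y := expansionRemainder n g a x
  have hs1 : (√n)⁻¹ ≤ 1 := inv_le_one_of_one_le₀ (Real.one_le_sqrt.2 hn)
  have hKhat : ‖K + (√n)⁻¹ • ξ + n⁻¹ • η‖ ≤ cK + (√n)⁻¹ * cξ + n⁻¹ * cη := by
    refine norm_add₃_le.trans ?_
    simp only [norm_smul, norm_inv, Real.norm_of_nonneg (Real.sqrt_nonneg n),
      Real.norm_of_nonneg (zero_le_one.trans hn)]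
    gcongr
  have hξη : ‖ξ x + (√n)⁻¹ • η x‖ ≤ (cξ + cη) * ‖x‖ := by
    calc ‖ξ x + (√n)⁻¹ • η x‖ ≤ ‖ξ x‖ + ‖η x‖ := by
          refine (norm_add_le _ _).trans (add_le_add_right ?_ _)
          rw [norm_smul, norm_inv, Real.norm_of_nonneg (Real.sqrt_nonneg n)]
          exact mul_le_of_le_one_left (norm_nonneg _) hs1
      _ ≤ cξ * ‖x‖ + cη * ‖x‖ := add_le_add (ξ.le_of_opNorm_le hξ x) (η.le_of_opNorm_le hη x)
      _ = (cξ + cη) * ‖x‖ := by ring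
  have hηa : ‖η a‖ ≤ (cξ + cη) * ‖a‖ :=
    η.le_of_opNorm_le (by linarith [(norm_nonneg ξ).trans hξ]) a
  have hKhat_y := (K + (√n)⁻¹ • ξ + n⁻¹ • η).le_of_opNorm_le hKhat y
  linarith [norm_add₃_le (a := (K + (√n)⁻¹ • ξ + n⁻¹ • η) y) (b := ξ x + (√n)⁻¹ • η x) (c := η a)]

theorem norm_expansionRemainder_succ_le (hn : 1 ≤ n) {cK cξ cη : ℝ} (hK : ‖K‖ ≤ cK)
    (hξ : ‖ξ‖ ≤ cξ) (hη : ‖η‖ ≤ cη) {c : ℕ → ℝ} (hc : ∀ m, 0 ≤ c m)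
    (hKpow : ∀ m x, ‖(K ^ m) x‖ ≤ c m * ‖x‖) (g : E) {j : ℕ} (hj : 1 ≤ j) :
    ‖expansionRemainder n ((K + (√n)⁻¹ • ξ + n⁻¹ • η) g) ((K ^ (j + 1)) b)
        (firstOrderTerm K ξ b ξ₀ (j + 1))‖ ≤
      (cK + (√n)⁻¹ * cξ + n⁻¹ * cη) *
          ‖expansionRemainder n g ((K ^ j) b) (firstOrderTerm K ξ b ξ₀ j)‖ +
        ((cξ + cη) * (‖(K ^ j) b‖ + c (j - 1) * ‖ξ₀‖) +
          (cξ + cη) * cξ * ∑ l ∈ range (j - 1), c l * ‖(K ^ (j - l - 1)) b‖) := by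
  have hcξη : 0 ≤ cξ + cη := add_nonneg ((norm_nonneg ξ).trans hξ) ((norm_nonneg η).trans hη)
  rw [firstOrderTerm_succ K ξ b ξ₀ hj, pow_succ', mul_apply_eq_comp]
  refine (norm_expansionRemainder_map_le η hn hK hξ hη _ _ _).trans ?_
  have := norm_firstOrderTerm_le K ξ b ξ₀ hc hKpow hξ j
  calc _ ≤ (cK + (√n)⁻¹ * cξ + n⁻¹ * cη) *
          ‖expansionRemainder n g ((K ^ j) b) (firstOrderTerm K ξ b ξ₀ j)‖ +
        (cξ + cη) * (‖(K ^ j) b‖ + (c (j - 1) * ‖ξ₀‖ +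
          cξ * ∑ l ∈ range (j - 1), c l * ‖(K ^ (j - l - 1)) b‖)) := by gcongr
    _ = _ := by ring

end Expansion

theorem stmt_10_general
    {H : Type*} [NormedAddCommGroup H] [InnerProductSpace ℝ H]
    {ι : Type*} (e : HilbertBasis ι ℝ H)
    (K ξ η : H →L[ℝ] H)
    (hs : (H →L[ℝ] H) → ℝ)
    (h_hs : ∀ T : H →L[ℝ] H, hs T = Real.sqrt (∑' i : ι, ‖T (e i)‖ ^ 2))
    (hK_HS : Summable fun i : ι => ‖K (e i)‖ ^ 2)
    (hξ_HS : Summable fun i : ι => ‖ξ (e i)‖ ^ 2)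
    (hη_HS : Summable fun i : ι => ‖η (e i)‖ ^ 2)
    (b ξ₀ η₀ : H) (n : ℕ) (hn : 1 ≤ n)
    (Khat : H →L[ℝ] H)
    (hKhat : Khat = K + (Real.sqrt n)⁻¹ • ξ + (n : ℝ)⁻¹ • η)
    (ghat : ℕ → H)
    (hghat1 : ghat 1 = K b + (Real.sqrt n)⁻¹ • ξ₀ + (n : ℝ)⁻¹ • η₀)
    (hghat_rec : ∀ j, 1 ≤ j → ghat (j + 1) = Khat (ghat j))
    (ζ : ℕ → H) (hζ : ∀ j, ζ j = ξ ((K ^ j) b))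
    (ξv : ℕ → H)
    (hξv : ∀ j, 1 ≤ j → ξv j = (K ^ (j - 1)) ξ₀ +
      ∑ k ∈ Finset.range (j - 1), (K ^ k) (ζ (j - k - 1)))
    (ηv : ℕ → H)
    (hηv : ∀ j, ηv j = (n : ℝ) • (ghat j - (K ^ j) b) - Real.sqrt n • ξv j)
    (R₁ R₂ : ℝ)
    (hR₁ : R₁ = hs K + (Real.sqrt n)⁻¹ * hs ξ + (n : ℝ)⁻¹ * hs η)
    (hR₂ : R₂ = hs ξ + hs η)
    (hsK : ℕ → ℝ)
    (h_hsK0 : hsK 0 = 1) (h_hsKm : ∀ m, 1 ≤ m → hsK m = hs (K ^ m)) :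
    ∀ j, 1 ≤ j →
      ghat j = (K ^ j) b + (Real.sqrt n)⁻¹ • ξv j + (n : ℝ)⁻¹ • ηv j ∧
      ‖ηv j‖ ≤ R₁ ^ (j - 1) * ‖η₀‖
        + R₂ * ∑ k ∈ Finset.Icc 1 (j - 1),
            R₁ ^ (j - k - 1) * (‖(K ^ k) b‖ + hsK (k - 1) * ‖ξ₀‖)
        + R₂ * hs ξ * ∑ k ∈ Finset.Icc 1 (j - 1),
            R₁ ^ (j - k - 1) *
              ∑ l ∈ Finset.range (k - 1), hsK l * ‖(K ^ (k - l - 1)) b‖ := by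
  obtain rfl : hs = hsNorm e := funext h_hs
  obtain rfl : hsK = hsNormPow e K := funext fun m => by
    unfold hsNormPow
    split_ifs with hm
    exacts [hm ▸ h_hsK0, h_hsKm m (Nat.one_le_iff_ne_zero.2 hm)]
  subst hKhat
  have hn₀ : (0 : ℝ) < n := by exact_mod_cast hn
  have hηv_eq : ∀ j, ηv j = expansionRemainder n (ghat j) ((K ^ j) b) (ξv j) := hηv
  have hξv_eq : ∀ j, 1 ≤ j → ξv j = firstOrderTerm K ξ b ξ₀ j := fun j hj => by
    simp only [hξv j hj, hζ, firstOrderTerm]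
  have hη₁ : ηv 1 = η₀ := by
    rw [hηv_eq, hξv_eq 1 le_rfl, expansionRemainder_eq_iff hn₀]
    simpa [firstOrderTerm] using hghat1
  have hR₁_nonneg : 0 ≤ R₁ := by
    have := hsNorm_nonneg (e := e) K
    have := hsNorm_nonneg (e := e) ξ
    have := hsNorm_nonneg (e := e) η
    rw [hR₁]
    positivity
  have hstep : ∀ j ≥ 1, ‖ηv (j + 1)‖ ≤ R₁ * ‖ηv j‖ +
      (R₂ * (‖(K ^ j) b‖ + hsNormPow e K (j - 1) * ‖ξ₀‖) +
        R₂ * hsNorm e ξ * ∑ l ∈ range (j - 1), hsNormPow e K l * ‖(K ^ (j - l - 1)) b‖) := by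
    intro j hj
    rw [hηv_eq, hghat_rec j hj, hξv_eq (j + 1) (by omega), hηv_eq j, hξv_eq j hj, hR₁, hR₂]
    exact norm_expansionRemainder_succ_le b ξ₀ η (by exact_mod_cast hn)
      (opNorm_le_hsNorm hK_HS) (opNorm_le_hsNorm hξ_HS) (opNorm_le_hsNorm hη_HS)
      (hsNormPow_nonneg K) (norm_pow_apply_le_hsNormPow hK_HS) _ hj
  intro j hj
  refine ⟨(expansionRemainder_eq_iff hn₀).1 (hηv_eq j).symm, ?_⟩
  refine (le_pow_mul_add_sum_of_le_mul_add (u := fun j => ‖ηv j‖) hR₁_nonneg hstep hj).trans_eq ?_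
  rw [hη₁, add_assoc, mul_sum, mul_sum, ← sum_add_distrib]
  exact congrArg _ (sum_congr rfl fun k _ => by ring)

/-- (Theorem 3, deterministic core: expansion (5.10)–(5.12) of the iterated estimators.)
`K` is a positive semidefinite, self-adjoint, trace-class operator on a separable real
Hilbert space `H` (with Hilbert basis `e`, used to express the Hilbert–Schmidt norm
`hs T = (∑_i ‖T (e i)‖²)^{1/2}`), `b ∈ H`, `ξ, η` are self-adjoint Hilbert–Schmidt
operators, `ξ₀, η₀ ∈ H`, and `K̂ = K + n^{-1/2} ξ + n^{-1} η`,
`ĝ₁ = K b + n^{-1/2} ξ₀ + n^{-1} η₀`, `ĝ_{j+1} = K̂ ĝ_j`.  With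
`ζ_j = ξ (K^j b)`, `ξ_j = K^{j-1} ξ₀ + ∑_{k=0}^{j-2} K^k ζ_{j-k-1}` and
`η_j = n (ĝ_j − K^j b) − n^{1/2} ξ_j`, for every `j ≥ 1` one has
`ĝ_j = K^j b + n^{-1/2} ξ_j + n^{-1} η_j` together with the bound (5.12) on `‖η_j‖`,
where `R₁ = ⫼K⫼ + n^{-1/2} ⫼ξ⫼ + n^{-1} ⫼η⫼`, `R₂ = ⫼ξ⫼ + ⫼η⫼`, and `hsK m = ⫼K^m⫼`
with the convention `hsK 0 = 1`. -/
theorem stmt_10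
    {H : Type*} [NormedAddCommGroup H] [InnerProductSpace ℝ H] [CompleteSpace H]
    {ι : Type*} (e : HilbertBasis ι ℝ H)
    (K ξ η : H →L[ℝ] H)
    (hK_sa : IsSelfAdjoint K) (hK_pos : ∀ x : H, 0 ≤ ⟪K x, x⟫)
    (hξ_sa : IsSelfAdjoint ξ) (hη_sa : IsSelfAdjoint η)
    (hs : (H →L[ℝ] H) → ℝ)
    (h_hs : ∀ T : H →L[ℝ] H, hs T = Real.sqrt (∑' i : ι, ‖T (e i)‖ ^ 2))
    (hK_HS : Summable fun i : ι => ‖K (e i)‖ ^ 2)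
    (hξ_HS : Summable fun i : ι => ‖ξ (e i)‖ ^ 2)
    (hη_HS : Summable fun i : ι => ‖η (e i)‖ ^ 2)
    (b ξ₀ η₀ : H) (n : ℕ) (hn : 1 ≤ n)
    (Khat : H →L[ℝ] H)
    (hKhat : Khat = K + (Real.sqrt n)⁻¹ • ξ + (n : ℝ)⁻¹ • η)
    (ghat : ℕ → H)
    (hghat1 : ghat 1 = K b + (Real.sqrt n)⁻¹ • ξ₀ + (n : ℝ)⁻¹ • η₀)
    (hghat_rec : ∀ j, 1 ≤ j → ghat (j + 1) = Khat (ghat j))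
    (ζ : ℕ → H) (hζ : ∀ j, ζ j = ξ ((K ^ j) b))
    (ξv : ℕ → H)
    (hξv : ∀ j, 1 ≤ j → ξv j = (K ^ (j - 1)) ξ₀ +
      ∑ k ∈ Finset.range (j - 1), (K ^ k) (ζ (j - k - 1)))
    (ηv : ℕ → H)
    (hηv : ∀ j, ηv j = (n : ℝ) • (ghat j - (K ^ j) b) - Real.sqrt n • ξv j)
    (R₁ R₂ : ℝ)
    (hR₁ : R₁ = hs K + (Real.sqrt n)⁻¹ * hs ξ + (n : ℝ)⁻¹ * hs η)
    (hR₂ : R₂ = hs ξ + hs η)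
    (hsK : ℕ → ℝ)
    (h_hsK0 : hsK 0 = 1) (h_hsKm : ∀ m, 1 ≤ m → hsK m = hs (K ^ m)) :
    ∀ j, 1 ≤ j →
      ghat j = (K ^ j) b + (Real.sqrt n)⁻¹ • ξv j + (n : ℝ)⁻¹ • ηv j ∧
      ‖ηv j‖ ≤ R₁ ^ (j - 1) * ‖η₀‖
        + R₂ * ∑ k ∈ Finset.Icc 1 (j - 1),
            R₁ ^ (j - k - 1) * (‖(K ^ k) b‖ + hsK (k - 1) * ‖ξ₀‖)
        + R₂ * hs ξ * ∑ k ∈ Finset.Icc 1 (j - 1),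
            R₁ ^ (j - k - 1) *
              ∑ l ∈ Finset.range (k - 1), hsK l * ‖(K ^ (k - l - 1)) b‖ :=
  stmt_10_general e K ξ η hs h_hs hK_HS hξ_HS hη_HS b ξ₀ η₀ n hn Khat hKhat ghat hghat1 hghat_rec ζ
    hζ ξv hξv ηv hηv R₁ R₂ hR₁ hR₂ hsK h_hsK0 h_hsKm
end
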